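/- Conversely, every formula of Elgesem's modal logic of agency satisfiable in a 3-valued model (X, g) satisfying (E1'), (E2'), (E3a'), (E3b') is satisfiable in a selection function model satisfying (E1), (E2), (E3). Specifically, after replacing (X, g) by its disjoint union with a copy of itself (so that no formula has a singleton extension), the selection function model defined by f(x)(A) = A if g(x)(A) = ⊤, A \ {x} if g(x)(A) = *, and ∅ if g(x)(A) = ⊥, satisfies (E1)–(E3) and every state satisfies the same formulas as in (X, g). -/

import Mathlib

/-!
The selection `f z A` is `A`, `A \ {z}` or `∅` according as `g z A` is `⊤`, `*` or `⊥`, so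
`z ∈ f z A` holds exactly when `g z A = ⊤` (using (E3b')), and `f z A ≠ ∅` exactly when
`g z A ≠ ⊥`, provided `A \ {z}` is nonempty whenever `g z A ≠ ⊥`. Doubling the model secures
this for every extension `A`: extensions are symmetric under swapping the two copies, so a
nonempty one has at least two points, and by (E3a') `g z A ≠ ⊥` forces `A ≠ ∅`. The truth lemma
then follows by induction on formulas, and (E1)–(E3) are read off from (E1'), (E2') and the
definition of `f`.
-/

inductive AForm : Type
  | bot : AForm
  | neg : AForm → AForm
  | and : AForm → AForm → AForm
  | E : AForm → AForm
  | C : AForm → AForm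

def satSel {X : Type} (f : X → Set X → Set X) : AForm → Set X
  | AForm.bot => ∅
  | AForm.neg φ => (satSel f φ)ᶜ
  | AForm.and φ ψ => satSel f φ ∩ satSel f ψ
  | AForm.E φ => {x | x ∈ f x (satSel f φ)}
  | AForm.C φ => {x | f x (satSel f φ) ≠ ∅}

def satThree {X : Type} (g : X → Set X → Fin 3) : AForm → Set X
  | AForm.bot => ∅
  | AForm.neg φ => (satThree g φ)ᶜ
  | AForm.and φ ψ => satThree g φ ∩ satThree g ψ
  | AForm.E φ => {x | g x (satThree g φ) = 2}
  | AForm.C φ => {x | g x (satThree g φ) ≠ 0}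

def doubled {X : Type} (g : X → Set X → Fin 3) :
    X ⊕ X → Set (X ⊕ X) → Fin 3 :=
  fun z A => Sum.elim (fun x => g x (Sum.inl ⁻¹' A)) (fun x => g x (Sum.inr ⁻¹' A)) z

def selOf {Z : Type} (g : Z → Set Z → Fin 3) : Z → Set Z → Set Z :=
  fun z A => if g z A = 2 then A else if g z A = 1 then A \ {z} else ∅

section SelOf

variable {Z : Type} (g : Z → Set Z → Fin 3) {z w : Z} {A B : Set Z}

theorem mem_selOf_iff : w ∈ selOf g z A ↔ w ∈ A ∧ g z A ≠ 0 ∧ (w = z → g z A = 2) := by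
  unfold selOf
  split_ifs with h2 h1
  · simp [h2]
  · simp [h1]
  · simp only [Set.mem_empty_iff_false, false_iff]
    omega

theorem selOf_subset : selOf g z A ⊆ A := fun _ hw => ((mem_selOf_iff g).1 hw).1

theorem selOf_eq_empty_of_eq_zero (h : g z A = 0) : selOf g z A = ∅ :=
  Set.eq_empty_of_forall_notMem fun _ hw => ((mem_selOf_iff g).1 hw).2.1 h

theorem selOf_inter_subset (h : min (g z A) (g z B) ≤ g z (A ∩ B)) :
    selOf g z A ∩ selOf g z B ⊆ selOf g z (A ∩ B) := by
  rintro w ⟨hwA, hwB⟩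
  obtain ⟨hA, hA0, hA2⟩ := (mem_selOf_iff g).1 hwA
  obtain ⟨hB, hB0, hB2⟩ := (mem_selOf_iff g).1 hwB
  refine (mem_selOf_iff g).2 ⟨⟨hA, hB⟩, ?_, fun hwz => ?_⟩
  · have hmin : 0 < min (g z A) (g z B) :=
      lt_min (Fin.pos_iff_ne_zero.2 hA0) (Fin.pos_iff_ne_zero.2 hB0)
    exact (hmin.trans_le h).ne'
  · rw [hA2 hwz, hB2 hwz] at h
    exact le_antisymm (Fin.le_last _) h

theorem mem_selOf_self_iff (h : g z A = 2 → z ∈ A) : z ∈ selOf g z A ↔ g z A = 2 := by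
  rw [mem_selOf_iff]
  constructor
  · exact fun hz => hz.2.2 rfl
  · intro h2
    exact ⟨h h2, by simp [h2], fun _ => h2⟩

theorem selOf_nonempty_iff (h : g z A ≠ 0 → (A \ {z}).Nonempty) :
    (selOf g z A).Nonempty ↔ g z A ≠ 0 := by
  constructor
  · rintro ⟨w, hw⟩
    exact ((mem_selOf_iff g).1 hw).2.1
  · intro h0
    obtain ⟨w, hwA, hwz⟩ := h h0
    exact ⟨w, (mem_selOf_iff g).2 ⟨hwA, h0, fun h' => absurd h' hwz⟩⟩

theorem satSel_selOf (hE3b : ∀ (z : Z) (A : Set Z), g z A = 2 → z ∈ A)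
    (hsplit : ∀ (z : Z) (ψ : AForm), g z (satThree g ψ) ≠ 0 → (satThree g ψ \ {z}).Nonempty)
    (ψ : AForm) : satSel (selOf g) ψ = satThree g ψ := by
  induction ψ with
  | bot => rfl
  | neg φ ih => simp only [satSel, satThree, ih]
  | and φ ψ ihφ ihψ => simp only [satSel, satThree, ihφ, ihψ]
  | E φ ih =>
    ext z
    simp only [satSel, satThree, Set.mem_ofPred_eq, ih]
    exact mem_selOf_self_iff g (hE3b z _)
  | C φ ih =>
    ext z
    simp only [satSel, satThree, Set.mem_ofPred_eq, ih, ← Set.nonempty_iff_ne_empty]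
    exact selOf_nonempty_iff g (hsplit z φ)

end SelOf

section Doubled

variable {X : Type} (g : X → Set X → Fin 3)

theorem preimage_inl_satThree_doubled (ψ : AForm) :
    Sum.inl ⁻¹' satThree (doubled g) ψ = satThree g ψ := by
  induction ψ with
  | bot => rfl
  | neg φ ih => simp only [satThree, Set.preimage_compl, ih]
  | and φ ψ ihφ ihψ => simp only [satThree, Set.preimage_inter, ihφ, ihψ]
  | E φ ih => ext; simp [satThree, doubled, ih]
  | C φ ih => ext; simp [satThree, doubled, ih]

theorem preimage_inr_satThree_doubled (ψ : AForm) :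
    Sum.inr ⁻¹' satThree (doubled g) ψ = satThree g ψ := by
  induction ψ with
  | bot => rfl
  | neg φ ih => simp only [satThree, Set.preimage_compl, ih]
  | and φ ψ ihφ ihψ => simp only [satThree, Set.preimage_inter, ihφ, ihψ]
  | E φ ih => ext; simp [satThree, doubled, ih]
  | C φ ih => ext; simp [satThree, doubled, ih]

theorem Sum.diff_singleton_nonempty_of_preimage_eq {A : Set (X ⊕ X)}
    (hsymm : Sum.inl ⁻¹' A = Sum.inr ⁻¹' A) (hne : (Sum.inl ⁻¹' A).Nonempty) (z : X ⊕ X) :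
    (A \ {z}).Nonempty := by
  obtain ⟨w, hwl⟩ := hne
  have hwr : Sum.inr w ∈ A := by rwa [← Set.mem_preimage, ← hsymm]
  by_cases hz : Sum.inl w = z
  · exact ⟨Sum.inr w, hwr, by simp [← hz]⟩
  · exact ⟨Sum.inl w, hwl, hz⟩

theorem satThree_doubled_diff_singleton_nonempty (hE3a : ∀ y : X, g y ∅ = 0)
    (z : X ⊕ X) (ψ : AForm) (h : doubled g z (satThree (doubled g) ψ) ≠ 0) :
    (satThree (doubled g) ψ \ {z}).Nonempty := by
  have hne : (satThree g ψ).Nonempty := by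
    rw [Set.nonempty_iff_ne_empty]
    rintro hempty
    rcases z with y | y <;>
      simp [doubled, preimage_inl_satThree_doubled, preimage_inr_satThree_doubled, hempty,
        hE3a] at h
  refine Sum.diff_singleton_nonempty_of_preimage_eq ?_ ?_ z
  · rw [preimage_inl_satThree_doubled, preimage_inr_satThree_doubled]
  · rwa [preimage_inl_satThree_doubled]

end Doubled

theorem stmt16 (φ : AForm) (X : Type) (g : X → Set X → Fin 3) (x : X)
    (hE1 : ∀ y : X, g y Set.univ = 0)
    (hE2 : ∀ (y : X) (A B : Set X), min (g y A) (g y B) ≤ g y (A ∩ B))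
    (hE3a : ∀ y : X, g y ∅ = 0)
    (hE3b : ∀ (y : X) (A : Set X), g y A = 2 → y ∈ A)
    (hx : x ∈ satThree g φ) :
    (∀ z : X ⊕ X, selOf (doubled g) z Set.univ = ∅) ∧
    (∀ (z : X ⊕ X) (A B : Set (X ⊕ X)),
      selOf (doubled g) z A ∩ selOf (doubled g) z B ⊆ selOf (doubled g) z (A ∩ B)) ∧
    (∀ (z : X ⊕ X) (A : Set (X ⊕ X)), selOf (doubled g) z A ⊆ A) ∧
    (∀ (ψ : AForm) (z : X ⊕ X),
      z ∈ satSel (selOf (doubled g)) ψ ↔ z ∈ satThree (doubled g) ψ) ∧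
    Sum.inl x ∈ satSel (selOf (doubled g)) φ := by
  have htruth (ψ : AForm) : satSel (selOf (doubled g)) ψ = satThree (doubled g) ψ := by
    refine satSel_selOf _ ?_ (satThree_doubled_diff_singleton_nonempty g hE3a) ψ
    rintro (y | y) A h
    exacts [hE3b y _ h, hE3b y _ h]
  refine ⟨?_, ?_, fun z A => selOf_subset _, fun ψ z => by rw [htruth], ?_⟩
  · rintro (y | y) <;> exact selOf_eq_empty_of_eq_zero _ (hE1 y)
  · rintro (y | y) A B <;> exact selOf_inter_subset _ (hE2 y _ _)
  · rw [htruth, ← Set.mem_preimage, preimage_inl_satThree_doubled]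
    exact hx
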